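/- For every deterministic δ ∈ ℝ^p with ‖Σ^{1/2}δ‖₂ = 1 satisfying the cone condition of E_s, and for any standard Gaussian h ∈ ℝ^p (deterministic inequality), one has |⟨h, Σ^{1/2}δ⟩| ≤ (k₀+2) K(s,k₀,Σ) · sup_{t ∈ U_s} |⟨t, Σ^{1/2}h⟩|, where U_s = {t ∈ S^{p−1} : |supp(t)| ≤ s}. -/

import Mathlib

open Finset

noncomputable def l1 {p : ℕ} (v : Fin p → ℝ) : ℝ := ∑ i, |v i|
noncomputable def l2 {p : ℕ} (v : Fin p → ℝ) : ℝ := Real.sqrt (∑ i, (v i) ^ 2)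

def restr {p : ℕ} (T : Finset (Fin p)) (v : Fin p → ℝ) : Fin p → ℝ :=
  fun i => if i ∈ T then v i else 0

/-- sparse unit sphere U_s -/
def Us (p s : ℕ) : Set (Fin p → ℝ) :=
  { t | l2 t = 1 ∧ (Finset.univ.filter fun i => t i ≠ 0).card ≤ s }

/-!
Put `w = Σ^{1/2} h` and `S = sup_{t ∈ U_s} |⟨t, w⟩|`. Since `Σ^{1/2}` is symmetric the left side is
`|⟨δ, w⟩|`, and `|⟨v, w⟩| ≤ S ‖v‖₂` for every `s`-sparse `v`; on `T₀` this gives `S ‖δ_{T₀}‖₂ ≤ S K`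
by the RE condition. Cut `T₀ᶜ` into consecutive blocks of the `s` largest remaining entries: each
block's ℓ₂ norm is at most the ℓ₁ norm of the previous block divided by `√s`, so the tail contributes
at most `S (‖δ_{T₀}‖₁ + ‖δ_{T₀ᶜ}‖₁) / √s`, which the cone condition and Cauchy–Schwarz on `T₀` bound
by `(1 + k₀) S K`.
-/

namespace Finset

variable {ι : Type*}

theorem sqrt_sum_sq_le_sum_abs_div_sqrt_card {A B : Finset ι} (δ : ι → ℝ) (hAB : #A ≤ #B)
    (hdom : ∀ i ∈ B, ∀ j ∈ A, |δ j| ≤ |δ i|) :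
    √(∑ j ∈ A, δ j ^ 2) ≤ (∑ i ∈ B, |δ i|) / √(#B : ℝ) := by
  rcases (#B).eq_zero_or_pos with hB | hB
  · rw [card_eq_zero.mp (show #A = 0 by omega), sum_empty, Real.sqrt_zero]
    positivity
  set L := ∑ i ∈ B, |δ i|
  have hn : (0 : ℝ) < #B := by exact_mod_cast hB
  have hbound : ∀ j ∈ A, δ j ^ 2 ≤ (L / #B) ^ 2 := fun j hj => by
    rw [← sq_abs]
    gcongr
    rw [le_div_iff₀ hn, mul_comm]
    simpa using card_nsmul_le_sum B _ _ fun i hi => hdom i hi j hj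
  refine Real.sqrt_le_iff.mpr ⟨by positivity, ?_⟩
  calc ∑ j ∈ A, δ j ^ 2 ≤ #A * (L / #B) ^ 2 := by simpa using sum_le_card_nsmul A _ _ hbound
    _ ≤ #B * (L / #B) ^ 2 := by gcongr
    _ = (L / √(#B : ℝ)) ^ 2 := by
      rw [div_pow, div_pow, Real.sq_sqrt hn.le]
      field_simp

theorem sum_abs_le_sqrt_card_mul_sqrt_sum_sq (T : Finset ι) (v : ι → ℝ) :
    ∑ i ∈ T, |v i| ≤ √(#T : ℝ) * √(∑ i ∈ T, v i ^ 2) := by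
  simpa using Real.sum_mul_le_sqrt_mul_sqrt T (fun _ => 1) fun i => |v i|

variable [DecidableEq ι]

theorem exists_largest_subset_card_eq {α : Type*} [LinearOrder α] (f : ι → α) {n : ℕ} :
    ∀ {A : Finset ι}, n ≤ #A → ∃ B ⊆ A, #B = n ∧ ∀ i ∈ B, ∀ j ∈ A \ B, f j ≤ f i := by
  induction n with
  | zero => exact fun _ => ⟨∅, empty_subset _, rfl, by simp⟩
  | succ n ih =>
    intro A hA
    obtain ⟨B, hBA, rfl, hB⟩ := ih (Nat.le_of_succ_le hA)
    have hne : (A \ B).Nonempty := by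
      rw [← card_pos, card_sdiff_of_subset hBA]
      omega
    obtain ⟨k, hk, hkmax⟩ := exists_max_image (A \ B) f hne
    have hkB : k ∉ B := (mem_sdiff.mp hk).2
    refine ⟨insert k B, insert_subset (mem_sdiff.mp hk).1 hBA, card_insert_of_notMem hkB, ?_⟩
    intro i hi j hj
    have hj' : j ∈ A \ B := sdiff_subset_sdiff subset_rfl (subset_insert k B) hj
    rcases mem_insert.mp hi with rfl | hiB
    · exact hkmax j hj'
    · exact hB i hiB j hj'

theorem abs_sum_mul_le_of_dominated {s : ℕ} (hs : 0 < s) {δ w : ι → ℝ} {S : ℝ} (hS : 0 ≤ S)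
    (hsparse : ∀ C : Finset ι, #C ≤ s → |∑ i ∈ C, δ i * w i| ≤ S * √(∑ i ∈ C, δ i ^ 2))
    (A B : Finset ι) (hB : #B = s) (hdom : ∀ i ∈ B, ∀ j ∈ A, |δ j| ≤ |δ i|) :
    |∑ j ∈ A, δ j * w j| ≤ S * (∑ i ∈ B, |δ i| + ∑ j ∈ A, |δ j|) / √s := by
  induction A using Finset.strongInduction generalizing B with
  | H A ih =>
  have hblock : ∀ C ⊆ A, #C ≤ s → |∑ j ∈ C, δ j * w j| ≤ S * (∑ i ∈ B, |δ i|) / √s :=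
    fun C hCA hCs => (hsparse C hCs).trans <| by
      rw [mul_div_assoc, ← hB]
      gcongr
      exact sqrt_sum_sq_le_sum_abs_div_sqrt_card δ (hB ▸ hCs) fun i hi j hj => hdom i hi j (hCA hj)
  by_cases hA : #A ≤ s
  · refine (hblock A subset_rfl hA).trans ?_
    gcongr
    exact le_add_of_nonneg_right (sum_nonneg fun j _ => abs_nonneg _)
  obtain ⟨B', hB'A, hB's, hdom'⟩ := exists_largest_subset_card_eq (fun i => |δ i|) (le_of_not_ge hA)
  have hrest := ih (A \ B') (sdiff_ssubset hB'A (card_pos.mp (by omega))) B' hB's hdom'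
  calc |∑ j ∈ A, δ j * w j| = |∑ j ∈ B', δ j * w j + ∑ j ∈ A \ B', δ j * w j| := by
        rw [← sum_sdiff hB'A, add_comm]
    _ ≤ |∑ j ∈ B', δ j * w j| + |∑ j ∈ A \ B', δ j * w j| := abs_add_le _ _
    _ ≤ S * (∑ i ∈ B, |δ i|) / √s + S * (∑ i ∈ B', |δ i| + ∑ j ∈ A \ B', |δ j|) / √s :=
        add_le_add (hblock B' hB'A hB's.le) hrest
    _ = S * (∑ i ∈ B, |δ i| + ∑ j ∈ A, |δ j|) / √s := by
        rw [← sum_sdiff hB'A (f := fun j => |δ j|)]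
        ring

end Finset

theorem Real.le_biSup {ι : Type*} {U : Set ι} {f : ι → ℝ} (hf : BddAbove (f '' U)) {t : ι}
    (ht : t ∈ U) : f t ≤ ⨆ t ∈ U, f t := by
  obtain ⟨C, hC⟩ := hf
  have hbdd : BddAbove (Set.range fun t => ⨆ _ : t ∈ U, f t) := by
    refine ⟨max C 0, ?_⟩
    rintro _ ⟨u, rfl⟩
    exact Real.iSup_le (fun hu => (hC ⟨u, hu, rfl⟩).trans (le_max_left _ _)) (le_max_right _ _)
  simpa only [ciSup_pos ht] using le_ciSup hbdd t

section

variable {p : ℕ}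

theorem l2_nonneg (v : Fin p → ℝ) : 0 ≤ l2 v := Real.sqrt_nonneg _

theorem l2_eq_zero_iff {v : Fin p → ℝ} : l2 v = 0 ↔ v = 0 := by
  rw [l2, Real.sqrt_eq_zero (sum_nonneg fun i _ => sq_nonneg _),
    sum_eq_zero_iff_of_nonneg fun i _ => sq_nonneg _]
  simp [funext_iff]

theorem l2_smul (c : ℝ) (v : Fin p → ℝ) : l2 (c • v) = |c| * l2 v := by
  simp only [l2, Pi.smul_apply, smul_eq_mul, mul_pow, ← mul_sum]
  rw [Real.sqrt_mul (sq_nonneg c), Real.sqrt_sq_eq_abs]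

theorem l1_restr (T : Finset (Fin p)) (v : Fin p → ℝ) : l1 (restr T v) = ∑ i ∈ T, |v i| := by
  simp [l1, restr, apply_ite, sum_ite_mem]

theorem l2_restr (T : Finset (Fin p)) (v : Fin p → ℝ) : l2 (restr T v) = √(∑ i ∈ T, v i ^ 2) := by
  simp [l2, restr, sum_ite_mem]

theorem sum_restr_mul (T : Finset (Fin p)) (v w : Fin p → ℝ) :
    ∑ i, restr T v i * w i = ∑ i ∈ T, v i * w i := by
  simp [restr, ite_mul, sum_ite_mem]

theorem card_support_restr_le (T : Finset (Fin p)) (v : Fin p → ℝ) :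
    (univ.filter fun i => restr T v i ≠ 0).card ≤ #T :=
  card_le_card fun i hi => by
    by_contra hiT
    simp [restr, hiT] at hi

theorem abs_sum_mul_le_l2_mul_l2 (t w : Fin p → ℝ) : |∑ i, t i * w i| ≤ l2 t * l2 w :=
  calc |∑ i, t i * w i| ≤ ∑ i, |t i| * |w i| := by
        simpa only [abs_mul] using abs_sum_le_sum_abs (fun i => t i * w i) univ
    _ ≤ √(∑ i, |t i| ^ 2) * √(∑ i, |w i| ^ 2) := Real.sum_mul_le_sqrt_mul_sqrt _ _ _
    _ = l2 t * l2 w := by simp only [l2, sq_abs]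

theorem abs_sum_mul_le_l2_mul_iSup_Us {s : ℕ} {v : Fin p → ℝ}
    (hv : (univ.filter fun i => v i ≠ 0).card ≤ s) (w : Fin p → ℝ) :
    |∑ i, v i * w i| ≤ l2 v * ⨆ t ∈ Us p s, |∑ i, t i * w i| := by
  rcases (l2_nonneg v).eq_or_lt with hv0 | hvpos
  · obtain rfl := l2_eq_zero_iff.mp hv0.symm
    rw [← hv0]
    simp
  have hmem : (l2 v)⁻¹ • v ∈ Us p s := by
    refine ⟨by rw [l2_smul, abs_inv, abs_of_pos hvpos, inv_mul_cancel₀ hvpos.ne'], ?_⟩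
    simpa [hvpos.ne'] using hv
  have hbdd : BddAbove ((fun t => |∑ i, t i * w i|) '' Us p s) :=
    ⟨l2 w, by rintro _ ⟨t, ht, rfl⟩; simpa [ht.1] using abs_sum_mul_le_l2_mul_l2 t w⟩
  calc |∑ i, v i * w i| = l2 v * |∑ i, ((l2 v)⁻¹ • v) i * w i| := by
        simp only [Pi.smul_apply, smul_eq_mul, mul_assoc, ← mul_sum]
        rw [abs_mul, abs_inv, abs_of_pos hvpos, mul_inv_cancel_left₀ hvpos.ne']
    _ ≤ l2 v * ⨆ t ∈ Us p s, |∑ i, t i * w i| := by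
        gcongr
        exact Real.le_biSup hbdd hmem

theorem abs_sum_mul_le_iSup_Us_mul_sqrt {s : ℕ} {C : Finset (Fin p)} (hC : #C ≤ s)
    (v w : Fin p → ℝ) :
    |∑ i ∈ C, v i * w i| ≤ (⨆ t ∈ Us p s, |∑ i, t i * w i|) * √(∑ i ∈ C, v i ^ 2) := by
  rw [mul_comm]
  simpa only [sum_restr_mul, l2_restr] using
    abs_sum_mul_le_l2_mul_iSup_Us ((card_support_restr_le C v).trans hC) w

end

open Matrix

theorem Matrix.IsSymm.dotProduct_mulVec_comm {n α : Type*} [Fintype n] [CommSemiring α]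
    {A : Matrix n n α} (hA : A.IsSymm) (x y : n → α) : x ⬝ᵥ (A *ᵥ y) = y ⬝ᵥ (A *ᵥ x) := by
  rw [dotProduct_mulVec, ← mulVec_transpose, hA.eq, dotProduct_comm]

theorem stmt12_general (p s : ℕ) (hs : 1 ≤ s) (k0 : ℝ) (hk0 : 0 < k0)
    (R : Matrix (Fin p) (Fin p) ℝ)
    (hRpsd : R.PosSemidef)
    (K : ℝ)
    -- RE(s,k₀,Σ) with constant K
    (hRE : ∀ J0 : Finset (Fin p), J0.card ≤ s → ∀ v : Fin p → ℝ, v ≠ 0 →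
      l1 (restr J0ᶜ v) ≤ k0 * l1 (restr J0 v) → l2 (restr J0 v) ≤ K * l2 (R.mulVec v))
    -- δ ∈ E_s
    (δ : Fin p → ℝ) (hδnorm : l2 (R.mulVec δ) = 1)
    (T0 : Finset (Fin p)) (hT0card : T0.card = s)
    (hT0max : ∀ i ∈ T0, ∀ j ∉ T0, |δ j| ≤ |δ i|)
    (hcone : l1 (restr T0ᶜ δ) ≤ k0 * l1 (restr T0 δ))
    (h : Fin p → ℝ) :
    |∑ i, h i * (R.mulVec δ) i| ≤
      (k0 + 2) * K * ⨆ t ∈ Us p s, |∑ i, t i * (R.mulVec h) i| := by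
  set w := R *ᵥ h
  set S := ⨆ t ∈ Us p s, |∑ i, t i * w i|
  have hS : 0 ≤ S := Real.iSup_nonneg fun t => Real.iSup_nonneg fun _ => abs_nonneg _
  have hsparse (C : Finset (Fin p)) (hC : #C ≤ s) :
      |∑ i ∈ C, δ i * w i| ≤ S * √(∑ i ∈ C, δ i ^ 2) :=
    abs_sum_mul_le_iSup_Us_mul_sqrt hC δ w
  have hδ : δ ≠ 0 := by
    rintro rfl
    simp [l2] at hδnorm
  have hhead : √(∑ i ∈ T0, δ i ^ 2) ≤ K := by
    simpa [l2_restr, hδnorm] using hRE T0 hT0card.le δ hδ hcone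
  have htail : |∑ i ∈ T0ᶜ, δ i * w i| ≤ S * ((1 + k0) * K) := by
    refine (abs_sum_mul_le_of_dominated hs hS hsparse T0ᶜ T0 hT0card
      fun i hi j hj => hT0max i hi j (mem_compl.mp hj)).trans ?_
    rw [mul_div_assoc]
    gcongr
    rw [div_le_iff₀ (by positivity)]
    rw [l1_restr, l1_restr] at hcone
    calc ∑ i ∈ T0, |δ i| + ∑ i ∈ T0ᶜ, |δ i| ≤ (1 + k0) * ∑ i ∈ T0, |δ i| := by linarith
      _ ≤ (1 + k0) * (√s * K) := by
        gcongr
        exact (sum_abs_le_sqrt_card_mul_sqrt_sum_sq T0 δ).trans (by rw [hT0card]; gcongr)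
      _ = (1 + k0) * K * √s := by ring
  calc |∑ i, h i * (R *ᵥ δ) i| = |∑ i ∈ T0, δ i * w i + ∑ i ∈ T0ᶜ, δ i * w i| := by
        rw [sum_add_sum_compl]
        exact congrArg _ <|
          IsSymm.dotProduct_mulVec_comm (isHermitian_iff_isSymm.mp hRpsd.isHermitian) h δ
    _ ≤ S * K + S * ((1 + k0) * K) :=
        (abs_add_le _ _).trans (add_le_add ((hsparse T0 hT0card.le).trans (by gcongr)) htail)
    _ = (k0 + 2) * K * S := by ring

/-- pointwise inequality
|⟨h, Σ^{1/2}δ⟩| ≤ (k₀+2) K(s,k₀,Σ) sup_{t∈U_s} |⟨t, Σ^{1/2}h⟩| for δ ∈ E_s. -/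
theorem stmt12 (p s : ℕ) (hs : 1 ≤ s) (hsp : 2 * s ≤ p) (k0 : ℝ) (hk0 : 0 < k0)
    (Sig R : Matrix (Fin p) (Fin p) ℝ)
    (hpsd : Sig.PosSemidef) (hRpsd : R.PosSemidef) (hRsq : R * R = Sig)
    (K : ℝ) (hK : 0 < K)
    -- RE(s,k₀,Σ) with constant K
    (hRE : ∀ J0 : Finset (Fin p), J0.card ≤ s → ∀ v : Fin p → ℝ, v ≠ 0 →
      l1 (restr J0ᶜ v) ≤ k0 * l1 (restr J0 v) → l2 (restr J0 v) ≤ K * l2 (R.mulVec v))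
    -- δ ∈ E_s
    (δ : Fin p → ℝ) (hδnorm : l2 (R.mulVec δ) = 1)
    (T0 : Finset (Fin p)) (hT0card : T0.card = s)
    (hT0max : ∀ i ∈ T0, ∀ j ∉ T0, |δ j| ≤ |δ i|)
    (hcone : l1 (restr T0ᶜ δ) ≤ k0 * l1 (restr T0 δ))
    (h : Fin p → ℝ) :
    |∑ i, h i * (R.mulVec δ) i| ≤
      (k0 + 2) * K * ⨆ t ∈ Us p s, |∑ i, t i * (R.mulVec h) i| :=
  stmt12_general p s hs k0 hk0 R hRpsd K hRE δ hδnorm T0 hT0card hT0max hcone h
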